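/- Let N ⊴ B₃ of finite index with N ≤ PB₃, and suppose (m,f) ∈ ℤ × F₂ satisfies the hexagon relations modulo N and 2m+1 represents a unit in ℤ/N_ord ℤ, where N_ord = lcm(ord(x₁₂N), ord(x₂₃N), ord(cN)). Then the following are equivalent: (1) T_{m,f} : B₃ → B₃/N is surjective; (2) its restriction T_{m,f} : PB₃ → PB₃/N is surjective; (3) its restriction T_{m,f} : F₂ → F₂/(N ∩ F₂) is surjective. -/

import Mathlib

/-!
`T` composed with `B₃/N → S₃` is `ρ`, because `σᵢ^(2m+1)` and `σᵢ` have the same image in `S₃`;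
as `N ≤ PB₃ = ker ρ`, a preimage under `T` of a pure braid is pure, which gives (1) ⇒ (2).
The image of `T` contains `σ₁^(2m+1)N`, a conjugate of `σ₂^(2m+1)N` by `fN`, and under (2) or
(3) also `σ₁²N`, `σ₂²N`, `fN`; hence it contains `σ₁N`, `σ₂N`, so (2) ⇒ (1) and (3) ⇒ (1).
For (1) ⇒ (3), let `Q` be the image of `F₂`. It contains `(x₁₂N)^(2m+1)`, hence `x₁₂N` since
`2m+1` is invertible modulo the order of `x₁₂N`. Writing the preimage of `fN` in
`PB₃ = ι(F₂) · ⟨c⟩` with `c` central shows that conjugation by `fN` preserves `Q`; as `Q`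
contains the conjugate of `(x₂₃N)^(2m+1)` by `(fN)⁻¹`, it contains `x₂₃N` in the same way.
-/

def braidRel : Set (FreeGroup (Fin 2)) :=
  {FreeGroup.of 0 * FreeGroup.of 1 * FreeGroup.of 0 *
    (FreeGroup.of 1 * FreeGroup.of 0 * FreeGroup.of 1)⁻¹}

/-- The Artin braid group on 3 strands. -/
abbrev B3 := PresentedGroup braidRel

def σ₁ : B3 := PresentedGroup.of 0
def σ₂ : B3 := PresentedGroup.of 1

/-- The standard projection B₃ → S₃. -/
def ρ : B3 →* Equiv.Perm (Fin 3) :=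
  PresentedGroup.toGroup (f := ![Equiv.swap 0 1, Equiv.swap 1 2]) (by
    intro r hr
    simp only [braidRel, Set.mem_singleton_iff] at hr
    subst hr
    simp only [map_mul, map_inv, FreeGroup.lift_apply_of]
    decide)

/-- The pure braid group on 3 strands. -/
def PB3 : Subgroup B3 := ρ.ker

def c : B3 := (σ₁ * σ₂ * σ₁) ^ 2

abbrev F2 := FreeGroup (Fin 2)
def xx : F2 := FreeGroup.of 0
def yy : F2 := FreeGroup.of 1

/-- The identification of F₂ with ⟨σ₁², σ₂²⟩ ≤ PB₃. -/
def ι : F2 →* B3 := FreeGroup.lift ![σ₁ ^ 2, σ₂ ^ 2]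

/-- The pair (m, f) satisfies the two hexagon relations modulo N. -/
def Hex (N : Subgroup B3) [N.Normal] (m : ℤ) (f : F2) : Prop :=
  QuotientGroup.mk' N (σ₁ ^ (2 * m + 1) * (ι f)⁻¹ * σ₂ ^ (2 * m + 1) * ι f) =
      QuotientGroup.mk' N ((ι f)⁻¹ * σ₁ * σ₂ * (σ₁ ^ 2) ^ (-m) * c ^ m) ∧
  QuotientGroup.mk' N ((ι f)⁻¹ * σ₂ ^ (2 * m + 1) * ι f * σ₁ ^ (2 * m + 1)) =
      QuotientGroup.mk' N (σ₂ * σ₁ * (σ₂ ^ 2) ^ (-m) * c ^ m * ι f)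

/-- N_ord: the lcm of the orders of x₁₂N, x₂₃N and cN in B₃/N. -/
noncomputable def Nord (N : Subgroup B3) [N.Normal] : ℕ :=
  Nat.lcm
    (Nat.lcm (orderOf (QuotientGroup.mk' N (σ₁ ^ 2)))
      (orderOf (QuotientGroup.mk' N (σ₂ ^ 2))))
    (orderOf (QuotientGroup.mk' N c))

/-- The endomorphism E_{m,f} of F₂. -/
def Emap (m : ℤ) (f : F2) : F2 →* F2 :=
  FreeGroup.lift ![xx ^ (2 * m + 1), f⁻¹ * yy ^ (2 * m + 1) * f]

/-- [m, f] is a GT-shadow with target N and kernel (source) K. -/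
def IsShadow (K N : Subgroup B3) [N.Normal] (m : ℤ) (f : F2) : Prop :=
  Hex N m f ∧
  (∃ g ∈ commutator F2, g⁻¹ * f ∈ N.comap ι) ∧
  IsUnit ((2 * m + 1 : ℤ) : ZMod (Nord N)) ∧
  ∃ T : B3 →* B3 ⧸ N,
    T σ₁ = QuotientGroup.mk' N (σ₁ ^ (2 * m + 1)) ∧
    T σ₂ = QuotientGroup.mk' N ((ι f)⁻¹ * σ₂ ^ (2 * m + 1) * ι f) ∧
    Function.Surjective T ∧
    T.ker = K

/-- [m, f] is a GT-shadow with target N (with unspecified source). -/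
def IsShadowTgt (N : Subgroup B3) [N.Normal] (m : ℤ) (f : F2) : Prop :=
  ∃ K : Subgroup B3, IsShadow K N m f

def Δ : B3 := σ₁ * σ₂ * σ₁

lemma σ₁_mul_σ₂_mul_σ₁ : σ₁ * σ₂ * σ₁ = σ₂ * σ₁ * σ₂ := by
  have h := PresentedGroup.mk_eq_mk_of_mul_inv_mem (rels := braidRel)
    (x := .of 0 * .of 1 * .of 0) (y := .of 1 * .of 0 * .of 1) rfl
  simp only [map_mul] at h
  exact h

lemma Δ_eq : Δ = σ₂ * σ₁ * σ₂ := σ₁_mul_σ₂_mul_σ₁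

lemma Δ_mul_σ₁ : Δ * σ₁ = σ₂ * Δ := by
  show Δ * σ₁ = σ₂ * (σ₁ * σ₂ * σ₁)
  rw [Δ_eq]; group

lemma Δ_mul_σ₂ : Δ * σ₂ = σ₁ * Δ := by
  show σ₁ * σ₂ * σ₁ * σ₂ = σ₁ * Δ
  rw [Δ_eq]; group

lemma c_eq : c = Δ * Δ := pow_two _

lemma c_eq_σ₁_σ₂ : c = σ₁ * σ₂ * σ₂ * σ₁ * σ₂ * σ₂ := by
  calc c = σ₁ * σ₂ * σ₁ * (σ₂ * σ₁ * σ₂) := by rw [c_eq, ← Δ_eq]; rfl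
  _ = σ₁ * σ₂ * (σ₁ * σ₂ * σ₁) * σ₂ := by group
  _ = σ₁ * σ₂ * σ₂ * σ₁ * σ₂ * σ₂ := by rw [σ₁_mul_σ₂_mul_σ₁]; group

lemma c_eq_σ₂_σ₁ : c = σ₂ * σ₁ * σ₁ * σ₂ * σ₁ * σ₁ := by
  calc c = σ₂ * σ₁ * σ₂ * (σ₁ * σ₂ * σ₁) := by rw [c_eq, ← Δ_eq]; rfl
  _ = σ₂ * σ₁ * (σ₂ * σ₁ * σ₂) * σ₁ := by group
  _ = σ₂ * σ₁ * σ₁ * σ₂ * σ₁ * σ₁ := by rw [← σ₁_mul_σ₂_mul_σ₁]; group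

lemma commute_c (g : B3) : Commute c g := by
  refine (PresentedGroup.generated_by braidRel (Subgroup.centralizer {c}) ?_ g |>
    Subgroup.mem_centralizer_singleton_iff.1).symm
  intro j
  rw [Subgroup.mem_centralizer_singleton_iff, c_eq]
  fin_cases j
  · calc σ₁ * (Δ * Δ) = Δ * σ₂ * Δ := by rw [Δ_mul_σ₂, mul_assoc]
    _ = Δ * Δ * σ₁ := by rw [mul_assoc, ← Δ_mul_σ₁, mul_assoc]
  · calc σ₂ * (Δ * Δ) = Δ * σ₁ * Δ := by rw [Δ_mul_σ₁, mul_assoc]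
    _ = Δ * Δ * σ₂ := by rw [mul_assoc, ← Δ_mul_σ₂, mul_assoc]

lemma ρ_σ₁ : ρ σ₁ = Equiv.swap 0 1 := PresentedGroup.toGroup.of _

lemma ρ_σ₂ : ρ σ₂ = Equiv.swap 1 2 := PresentedGroup.toGroup.of _

lemma ρ_c : ρ c = 1 := by
  rw [c_eq, Δ]; simp only [map_mul, ρ_σ₁, ρ_σ₂]; decide

@[simp] lemma ι_xx : ι xx = σ₁ ^ 2 := by simp [ι, xx]

@[simp] lemma ι_yy : ι yy = σ₂ ^ 2 := by simp [ι, yy]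

lemma ρ_ι (w : F2) : ρ (ι w) = 1 := by
  suffices ρ.comp ι = 1 from DFunLike.congr_fun this w
  refine FreeGroup.ext_hom _ _ fun i => ?_
  fin_cases i
  · change ρ (ι xx) = 1
    rw [ι_xx, map_pow, ρ_σ₁]; decide
  · change ρ (ι yy) = 1
    rw [ι_yy, map_pow, ρ_σ₂]; decide

lemma ι_mem_PB3 (w : F2) : ι w ∈ PB3 := ρ_ι w

def cosetRep : Fin 6 → B3
  | 0 => 1
  | 1 => σ₁
  | 2 => σ₂
  | 3 => σ₁ * σ₂
  | 4 => σ₂ * σ₁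
  | 5 => Δ

lemma ρ_cosetRep_ne_one {i : Fin 6} (hi : i ≠ 0) : ρ (cosetRep i) ≠ 1 := by
  fin_cases i
  · exact absurd rfl hi
  all_goals simp only [cosetRep, Δ, map_mul, ρ_σ₁, ρ_σ₂]; decide

def IsCosetForm (a : B3) : Prop := ∃ (v : F2) (k : ℤ) (i : Fin 6), a = ι v * c ^ k * cosetRep i

lemma IsCosetForm.ι_mul_c_zpow_mul {a : B3} (ha : IsCosetForm a) (v : F2) (k : ℤ) :
    IsCosetForm (ι v * c ^ k * a) := by
  obtain ⟨w, j, i, rfl⟩ := ha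
  refine ⟨v * w, k + j, i, ?_⟩
  rw [map_mul, zpow_add]
  simp only [mul_assoc]
  rw [← mul_assoc (c ^ k), ((commute_c _).zpow_left k).eq]
  simp only [mul_assoc]

lemma isCosetForm_cosetRep_mul_σ₁ (i : Fin 6) : IsCosetForm (cosetRep i * σ₁) := by
  fin_cases i
  · exact ⟨1, 0, 1, by simp [cosetRep]⟩
  · exact ⟨xx, 0, 0, by simp [cosetRep, pow_two]⟩
  · exact ⟨1, 0, 4, by simp [cosetRep]⟩
  · exact ⟨1, 0, 5, by simp [cosetRep, Δ]⟩
  · refine ⟨xx⁻¹ * yy⁻¹, 1, 2, ?_⟩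
    simp only [cosetRep, map_mul, map_inv, ι_xx, ι_yy, zpow_one]
    rw [mul_assoc _ c, (commute_c σ₂).eq, c_eq_σ₂_σ₁]; group
  · refine ⟨yy, 0, 3, ?_⟩
    simp only [cosetRep, ι_yy, zpow_zero, mul_one]
    rw [Δ_mul_σ₁, Δ_eq]; simp only [pow_two, mul_assoc]

lemma isCosetForm_cosetRep_mul_σ₂ (i : Fin 6) : IsCosetForm (cosetRep i * σ₂) := by
  fin_cases i
  · exact ⟨1, 0, 2, by simp [cosetRep]⟩
  · exact ⟨1, 0, 3, by simp [cosetRep]⟩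
  · exact ⟨yy, 0, 0, by simp [cosetRep, pow_two]⟩
  · refine ⟨yy⁻¹ * xx⁻¹, 1, 1, ?_⟩
    simp only [cosetRep, map_mul, map_inv, ι_xx, ι_yy, zpow_one]
    rw [mul_assoc _ c, (commute_c σ₁).eq, c_eq_σ₁_σ₂]; group
  · exact ⟨1, 0, 5, by simp [cosetRep, Δ_eq]⟩
  · refine ⟨xx, 0, 4, ?_⟩
    simp only [cosetRep, ι_xx, zpow_zero, mul_one]
    rw [Δ_mul_σ₂, Δ]; simp only [pow_two, mul_assoc]

lemma IsCosetForm.mul_σ₁ {a : B3} (ha : IsCosetForm a) : IsCosetForm (a * σ₁) := by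
  obtain ⟨v, k, i, rfl⟩ := ha
  rw [mul_assoc]
  exact (isCosetForm_cosetRep_mul_σ₁ i).ι_mul_c_zpow_mul v k

lemma IsCosetForm.mul_σ₂ {a : B3} (ha : IsCosetForm a) : IsCosetForm (a * σ₂) := by
  obtain ⟨v, k, i, rfl⟩ := ha
  rw [mul_assoc]
  exact (isCosetForm_cosetRep_mul_σ₂ i).ι_mul_c_zpow_mul v k

lemma IsCosetForm.mul_c_inv {a : B3} (ha : IsCosetForm a) : IsCosetForm (a * c⁻¹) := by
  rw [← ((commute_c a).inv_left).eq]
  simpa using ha.ι_mul_c_zpow_mul 1 (-1)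

-- `c = Δ²` gives `σ₁⁻¹ = c⁻¹ σ₁σ₂σ₁σ₁σ₂` and `σ₂⁻¹ = c⁻¹ σ₂σ₁σ₂σ₂σ₁`.
lemma IsCosetForm.mul_σ₁_inv {a : B3} (ha : IsCosetForm a) : IsCosetForm (a * σ₁⁻¹) := by
  convert ha.mul_c_inv.mul_σ₁.mul_σ₂.mul_σ₁.mul_σ₁.mul_σ₂ using 1
  rw [c_eq, Δ]; group

lemma IsCosetForm.mul_σ₂_inv {a : B3} (ha : IsCosetForm a) : IsCosetForm (a * σ₂⁻¹) := by
  convert ha.mul_c_inv.mul_σ₂.mul_σ₁.mul_σ₂.mul_σ₂.mul_σ₁ using 1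
  rw [c_eq, Δ_eq]; group

lemma isCosetForm (a : B3) : IsCosetForm a := by
  have ha : a ∈ Subgroup.closure (Set.range (PresentedGroup.of : Fin 2 → B3)) := by simp
  induction ha using Subgroup.closure_induction_right with
  | one => exact ⟨1, 0, 0, by simp [cosetRep]⟩
  | mul_right _ _ _ hy ih =>
    obtain ⟨j, rfl⟩ := hy
    fin_cases j
    exacts [ih.mul_σ₁, ih.mul_σ₂]
  | mul_inv_cancel _ _ _ hy ih =>
    obtain ⟨j, rfl⟩ := hy
    fin_cases j
    exacts [ih.mul_σ₁_inv, ih.mul_σ₂_inv]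

lemma exists_eq_ι_mul_c_zpow_of_mem_PB3 {a : B3} (ha : a ∈ PB3) :
    ∃ (v : F2) (k : ℤ), a = ι v * c ^ k := by
  obtain ⟨v, k, i, rfl⟩ := isCosetForm a
  obtain rfl : i = 0 := by
    by_contra hi
    refine ρ_cosetRep_ne_one hi ?_
    have h : ρ (ι v * c ^ k * cosetRep i) = 1 := ha
    simpa [ρ_ι, ρ_c] using h
  exact ⟨v, k, mul_one _⟩

lemma zpow_two_mul_add_one_eq_self {G : Type*} [Group G] {g : G} (hg : g * g = 1) (m : ℤ) :
    g ^ (2 * m + 1) = g := by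
  rw [zpow_add, zpow_mul, zpow_two, hg, one_zpow, one_mul, zpow_one]

lemma Subgroup.mem_of_sq_mem_of_zpow_two_mul_add_one_mem {G : Type*} [Group G]
    {S : Subgroup G} {g : G} (m : ℤ) (h2 : g ^ 2 ∈ S) (h : g ^ (2 * m + 1) ∈ S) : g ∈ S := by
  have hg : g = g ^ (2 * m + 1) * (g ^ 2) ^ (-m) := by group
  rw [hg]
  exact S.mul_mem h (S.zpow_mem h2 _)

lemma Subgroup.mem_of_zpow_mem_of_isUnit {G : Type*} [Group G] {S : Subgroup G} {g : G}
    {n : ℕ} {t : ℤ} (hg : orderOf g ∣ n) (ht : IsUnit (t : ZMod n)) (h : g ^ t ∈ S) :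
    g ∈ S := by
  obtain ⟨b, hb⟩ := isUnit_iff_exists_inv.mp ht
  obtain ⟨k, rfl⟩ := ZMod.intCast_surjective b
  have htk : t * k ≡ 1 [ZMOD n] := (ZMod.intCast_eq_intCast_iff _ _ _).1 (by push_cast; exact hb)
  have hgk : g ^ (t * k) = g ^ (1 : ℤ) :=
    zpow_eq_zpow_iff_modEq.2 (htk.of_dvd (Int.natCast_dvd_natCast.2 hg))
  rw [← zpow_one g, ← hgk, zpow_mul]
  exact S.zpow_mem h k

lemma surjective_of_mk_ι_mem_range {Q : Type*} [Group Q] {π : B3 →* Q}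
    (hπ : Function.Surjective π) {T : B3 →* Q} {m : ℤ} {f : F2}
    (hT1 : T σ₁ = π (σ₁ ^ (2 * m + 1))) (hT2 : T σ₂ = π ((ι f)⁻¹ * σ₂ ^ (2 * m + 1) * ι f))
    (hι : ∀ w : F2, π (ι w) ∈ T.range) : Function.Surjective T := by
  have h1 : π σ₁ ^ 2 ∈ T.range := by simpa using hι xx
  have h2 : π σ₂ ^ 2 ∈ T.range := by simpa using hι yy
  simp only [map_mul, map_inv, map_zpow] at hT1 hT2
  have hσ₁ : π σ₁ ∈ T.range :=
    T.range.mem_of_sq_mem_of_zpow_two_mul_add_one_mem m h1 ⟨σ₁, hT1⟩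
  have hσ₂ : π σ₂ ∈ T.range := by
    refine T.range.mem_of_sq_mem_of_zpow_two_mul_add_one_mem m h2 ?_
    have h : π σ₂ ^ (2 * m + 1) = π (ι f) * T σ₂ * (π (ι f))⁻¹ := by rw [hT2]; group
    rw [h]
    exact T.range.mul_mem (T.range.mul_mem (hι f) ⟨σ₂, rfl⟩) (T.range.inv_mem (hι f))
  rw [← MonoidHom.range_eq_top, eq_top_iff, ← MonoidHom.range_eq_top.2 hπ]
  rintro _ ⟨b, rfl⟩
  refine PresentedGroup.generated_by braidRel (T.range.comap π) (fun j => ?_) b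
  fin_cases j
  exacts [hσ₁, hσ₂]

section ShadowMap

variable {N : Subgroup B3} [N.Normal] {m : ℤ} {f : F2} {T : B3 →* B3 ⧸ N}

lemma lift_ρ_comp (hle : N ≤ PB3) (hT1 : T σ₁ = QuotientGroup.mk' N (σ₁ ^ (2 * m + 1)))
    (hT2 : T σ₂ = QuotientGroup.mk' N ((ι f)⁻¹ * σ₂ ^ (2 * m + 1) * ι f)) :
    (QuotientGroup.lift N ρ hle).comp T = ρ := by
  refine PresentedGroup.ext fun j => ?_
  fin_cases j
  · change QuotientGroup.lift N ρ hle (T σ₁) = ρ σ₁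
    rw [hT1]
    change ρ (σ₁ ^ (2 * m + 1)) = ρ σ₁
    rw [map_zpow, ρ_σ₁]
    exact zpow_two_mul_add_one_eq_self (Equiv.swap_mul_self 0 1) m
  · change QuotientGroup.lift N ρ hle (T σ₂) = ρ σ₂
    rw [hT2]
    change ρ ((ι f)⁻¹ * σ₂ ^ (2 * m + 1) * ι f) = ρ σ₂
    simp only [map_mul, map_inv, map_zpow, ρ_ι, ρ_σ₂, inv_one, one_mul, mul_one]
    exact zpow_two_mul_add_one_eq_self (Equiv.swap_mul_self 1 2) m

lemma ρ_eq_of_apply_eq_mk (hle : N ≤ PB3) (hT1 : T σ₁ = QuotientGroup.mk' N (σ₁ ^ (2 * m + 1)))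
    (hT2 : T σ₂ = QuotientGroup.mk' N ((ι f)⁻¹ * σ₂ ^ (2 * m + 1) * ι f)) {a b : B3}
    (h : T a = QuotientGroup.mk' N b) : ρ a = ρ b := by
  rw [← DFunLike.congr_fun (lift_ρ_comp hle hT1 hT2) a, MonoidHom.comp_apply, h]
  rfl

-- `ι f ∈ PB₃` is hit by some `ι v * c ^ k`, and `T c` is central in the image of `T`.
lemma mk_ι_conj_mem_range (hle : N ≤ PB3)
    (hT1 : T σ₁ = QuotientGroup.mk' N (σ₁ ^ (2 * m + 1)))
    (hT2 : T σ₂ = QuotientGroup.mk' N ((ι f)⁻¹ * σ₂ ^ (2 * m + 1) * ι f))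
    (hsurj : Function.Surjective T) {z : B3 ⧸ N} (hz : z ∈ (T.comp ι).range) :
    QuotientGroup.mk' N (ι f) * z * (QuotientGroup.mk' N (ι f))⁻¹ ∈ (T.comp ι).range := by
  obtain ⟨a, ha⟩ := hsurj (QuotientGroup.mk' N (ι f))
  have haPB3 : a ∈ PB3 := (ρ_eq_of_apply_eq_mk hle hT1 hT2 ha).trans (ρ_ι f)
  obtain ⟨v, k, rfl⟩ := exists_eq_ι_mul_c_zpow_of_mem_PB3 haPB3
  have hcz : Commute (T c ^ k) z := by
    obtain ⟨b, rfl⟩ := hsurj z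
    exact ((commute_c b).map T).zpow_left k
  have hconj : T (ι v * c ^ k) * z * (T (ι v * c ^ k))⁻¹ = T (ι v) * z * (T (ι v))⁻¹ := by
    rw [map_mul, map_zpow, mul_assoc (T (ι v)), hcz.eq]; group
  rw [← ha, hconj]
  exact Subgroup.mul_mem _ (Subgroup.mul_mem _ ⟨v, rfl⟩ hz) (Subgroup.inv_mem _ ⟨v, rfl⟩)

lemma orderOf_mk_σ₁_sq_dvd_Nord : orderOf (QuotientGroup.mk' N (σ₁ ^ 2)) ∣ Nord N :=
  (Nat.dvd_lcm_left _ _).trans (Nat.dvd_lcm_left _ _)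

lemma orderOf_mk_σ₂_sq_dvd_Nord : orderOf (QuotientGroup.mk' N (σ₂ ^ 2)) ∣ Nord N :=
  (Nat.dvd_lcm_right _ _).trans (Nat.dvd_lcm_left _ _)

lemma exists_apply_ι_eq_of_surjective (hle : N ≤ PB3)
    (hunit : IsUnit ((2 * m + 1 : ℤ) : ZMod (Nord N)))
    (hT1 : T σ₁ = QuotientGroup.mk' N (σ₁ ^ (2 * m + 1)))
    (hT2 : T σ₂ = QuotientGroup.mk' N ((ι f)⁻¹ * σ₂ ^ (2 * m + 1) * ι f))
    (hsurj : Function.Surjective T) (w : F2) :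
    ∃ v : F2, T (ι v) = QuotientGroup.mk' N (ι w) := by
  set π := QuotientGroup.mk' N
  set Q := (T.comp ι).range
  have hx : π (σ₁ ^ 2) ∈ Q := by
    refine Q.mem_of_zpow_mem_of_isUnit orderOf_mk_σ₁_sq_dvd_Nord hunit ⟨xx, ?_⟩
    change T (ι xx) = _
    rw [ι_xx, map_pow, hT1, ← map_pow, ← map_zpow]
    congr 1
    group
  have hy : π (σ₂ ^ 2) ∈ Q := by
    refine Q.mem_of_zpow_mem_of_isUnit orderOf_mk_σ₂_sq_dvd_Nord hunit ?_
    have h : π (σ₂ ^ 2) ^ (2 * m + 1) = π (ι f) * T (ι yy) * (π (ι f))⁻¹ := by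
      rw [ι_yy, map_pow T, hT2, sq (π _)]
      simp only [map_mul, map_inv, map_zpow, map_pow]
      group
    rw [h]
    exact mk_ι_conj_mem_range hle hT1 hT2 hsurj ⟨yy, rfl⟩
  have hall : Q.comap (π.comp ι) = ⊤ := by
    rw [eq_top_iff, ← FreeGroup.closure_range_of, Subgroup.closure_le]
    rintro _ ⟨i, rfl⟩
    fin_cases i
    · change π (ι xx) ∈ Q
      rwa [ι_xx]
    · change π (ι yy) ∈ Q
      rwa [ι_yy]
  obtain ⟨v, hv⟩ : w ∈ Q.comap (π.comp ι) := hall ▸ Subgroup.mem_top w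
  exact ⟨v, hv⟩

end ShadowMap

theorem surjectivity_tfae_general (N : Subgroup B3) [N.Normal]
    (hle : N ≤ PB3) (m : ℤ) (f : F2)
    (hunit : IsUnit ((2 * m + 1 : ℤ) : ZMod (Nord N)))
    (T : B3 →* B3 ⧸ N)
    (hT1 : T σ₁ = QuotientGroup.mk' N (σ₁ ^ (2 * m + 1)))
    (hT2 : T σ₂ = QuotientGroup.mk' N ((ι f)⁻¹ * σ₂ ^ (2 * m + 1) * ι f)) :
    List.TFAE
      [Function.Surjective T,
       ∀ b ∈ PB3, ∃ a ∈ PB3, T a = QuotientGroup.mk' N b,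
       ∀ w : F2, ∃ v : F2, T (ι v) = QuotientGroup.mk' N (ι w)] := by
  have hsurj (hι : ∀ w : F2, QuotientGroup.mk' N (ι w) ∈ T.range) : Function.Surjective T :=
    surjective_of_mk_ι_mem_range (QuotientGroup.mk'_surjective N) hT1 hT2 hι
  tfae_have 1 → 2 := fun h b hb => by
    obtain ⟨a, ha⟩ := h (QuotientGroup.mk' N b)
    exact ⟨a, (ρ_eq_of_apply_eq_mk hle hT1 hT2 ha).trans hb, ha⟩
  tfae_have 2 → 1 := fun h => hsurj fun w =>
    let ⟨a, _, ha⟩ := h _ (ι_mem_PB3 w)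
    ⟨a, ha⟩
  tfae_have 1 → 3 := exists_apply_ι_eq_of_surjective hle hunit hT1 hT2
  tfae_have 3 → 1 := fun h => hsurj fun w =>
    let ⟨v, hv⟩ := h w
    ⟨ι v, hv⟩
  tfae_finish

/-- Equivalence of the three surjectivity conditions for T_{m,f}. -/
theorem surjectivity_tfae (N : Subgroup B3) [N.Normal] (hfin : N.FiniteIndex)
    (hle : N ≤ PB3) (m : ℤ) (f : F2) (hhex : Hex N m f)
    (hunit : IsUnit ((2 * m + 1 : ℤ) : ZMod (Nord N)))
    (T : B3 →* B3 ⧸ N)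
    (hT1 : T σ₁ = QuotientGroup.mk' N (σ₁ ^ (2 * m + 1)))
    (hT2 : T σ₂ = QuotientGroup.mk' N ((ι f)⁻¹ * σ₂ ^ (2 * m + 1) * ι f)) :
    List.TFAE
      [Function.Surjective T,
       ∀ b ∈ PB3, ∃ a ∈ PB3, T a = QuotientGroup.mk' N b,
       ∀ w : F2, ∃ v : F2, T (ι v) = QuotientGroup.mk' N (ι w)] :=
  surjectivity_tfae_general N hle m f hunit T hT1 hT2
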